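/- Let 𝔖 be an almost-arithmetic cofinite G-semimatroid, let A∈𝒞̲, and let a₁,…,a_k∈E_𝔖 be distinct orbits not in A with rk̲(A∪{a₁,…,a_k})=rk̲(A)+k. Then for every choice of X∈𝒞_A and of representatives x_i∈a_i (i=1,…,k), m_𝔖(A∪{a₁,…,a_k}) = m_𝔖(A) · [Γ(X)×Π_{i=1}^k Γ(x_i) : θ(G)], where Γ(X):=G/stab(X), Γ(x_i):=G/stab(x_i), and θ:G→Γ(X)×Π_i Γ(x_i) is the homomorphism θ(g)=([g]_X,[g]_{x₁},…,[g]_{x_k}) sending g to its classes modulo the respective stabilizers. -/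

import Mathlib

/-!
In a translative action a central set meets every orbit at most once, and the rank condition
lets any central set over `A` be enlarged by an arbitrary point of each `aᵢ` (an exchange
argument using (CR1) and (CR2)). Hence `(Y, z) ↦ Y ∪ {zᵢ • xᵢ}` is a `G`-equivariant bijection
`𝒞_A × Π Γ(xᵢ) → 𝒞_{A ∪ {a₁,…,a_k}}`. Normality of the point stabilizers forces every set in
`𝒞_A` to have the stabilizer `H = stab X`, so the orbits of `𝒞_A × Π Γ(xᵢ)` number
`m(A) · |(Π Γ(xᵢ)) / H|`, and `(Π Γ(xᵢ)) / H` is in bijection with the `G`-orbits of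
`Γ(X) × Π Γ(xᵢ)`.
-/

open scoped Classical Pointwise


/-- A finitary semimatroid on the ground set `S`: a nonempty, finite-dimensional
simplicial complex `C` of finite subsets of `S` (containing all singletons), together
with a rank function satisfying (R1)-(R3), (CR1), (CR2). -/
structure FinSemimatroid (S : Type*) [DecidableEq S] where
  C : Set (Finset S)
  rk : Finset S → ℕ
  nonempty : C.Nonempty
  downClosed : ∀ ⦃X Y : Finset S⦄, X ∈ C → Y ⊆ X → Y ∈ C
  singleton_mem : ∀ x : S, ({x} : Finset S) ∈ C
  finDim : ∃ d : ℕ, ∀ X ∈ C, X.card ≤ d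
  r1 : ∀ X ∈ C, rk X ≤ X.card
  r2 : ∀ ⦃X Y : Finset S⦄, X ∈ C → Y ∈ C → X ⊆ Y → rk X ≤ rk Y
  r3 : ∀ ⦃X Y : Finset S⦄, X ∈ C → Y ∈ C → X ∪ Y ∈ C →
    rk (X ∪ Y) + rk (X ∩ Y) ≤ rk X + rk Y
  cr1 : ∀ ⦃X Y : Finset S⦄, X ∈ C → Y ∈ C → rk X = rk (X ∩ Y) → X ∪ Y ∈ C
  cr2 : ∀ ⦃X Y : Finset S⦄, X ∈ C → Y ∈ C → rk X < rk Y →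
    ∃ y ∈ Y, y ∉ X ∧ insert y X ∈ C

namespace FinSemimatroid

variable {S : Type*} [DecidableEq S]

/-- The closure of a central set. -/
def cl (M : FinSemimatroid S) (X : Finset S) : Set S :=
  {y : S | insert y X ∈ M.C ∧ M.rk (insert y X) = M.rk X}

/-- A flat is a closed central set. -/
def IsFlat (M : FinSemimatroid S) (X : Finset S) : Prop :=
  X ∈ M.C ∧ M.cl X = (X : Set S)

/-- The poset of flats, ordered by inclusion. -/
abbrev Flats (M : FinSemimatroid S) : Type _ := {X : Finset S // M.IsFlat X}

/-- A simple finitary semimatroid. -/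
def Simple (M : FinSemimatroid S) : Prop :=
  (∀ x : S, M.rk {x} = 1) ∧
    ∀ x y : S, x ≠ y → ({x, y} : Finset S) ∈ M.C → M.rk {x, y} = 2

end FinSemimatroid

/-- A poset is chain-finite if all its chains are finite. -/
def ChainFinite (L : Type*) [PartialOrder L] : Prop :=
  ∀ c : Set L, IsChain (· ≤ ·) c → c.Finite

/-- An atom of a bounded-below poset: an element covering the minimum. -/
def PosetAtom {L : Type*} [PartialOrder L] (a : L) : Prop :=
  ∃ bot : L, IsBot bot ∧ bot ⋖ a

/-- `L` (with rank function `rk`) is a finite geometric lattice (finite, bounded below,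
a lattice, ranked by `rk`, atomic and semimodular) with at most `N` atoms. -/
def IsFinGeomLatticeAtMost (L : Type*) [PartialOrder L] (rk : L → ℕ) (N : ℕ) : Prop :=
  Finite L ∧
    ∃ bot : L, IsBot bot ∧
      (∀ x y : L, ∃ m : L, IsGLB {x, y} m) ∧
      (∀ x y : L, ∃ j : L, IsLUB {x, y} j) ∧
      (∀ x y : L, x ⋖ y → rk y = rk x + 1) ∧
      (∀ x : L, ∃ A : Set L, (∀ a ∈ A, bot ⋖ a) ∧ IsLUB A x) ∧
      (∀ x y m j : L, IsGLB {x, y} m → IsLUB {x, y} j → rk j + rk m ≤ rk x + rk y) ∧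
      Nat.card {a : L | bot ⋖ a} ≤ N
/-- A `G`-semimatroid: an action of `G` on a finitary semimatroid, preserving
centrality and rank. -/
structure GSemimatroid (G S : Type*) [Group G] [MulAction G S] [DecidableEq S]
    extends FinSemimatroid S where
  smul_mem : ∀ (g : G) ⦃X : Finset S⦄, X ∈ C → X.image (g • ·) ∈ C
  rk_smul : ∀ (g : G) ⦃X : Finset S⦄, X ∈ C → rk (X.image (g • ·)) = rk X

namespace GSemimatroid

variable {G S : Type*} [Group G] [MulAction G S] [DecidableEq S]

/-- The set of orbits `E_𝔖 = S/G`. -/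
abbrev E (G S : Type*) [Group G] [MulAction G S] : Type _ :=
  Quotient (MulAction.orbitRel G S)

/-- The orbit of a point. -/
def orbOf (G : Type*) {S : Type*} [Group G] [MulAction G S] (x : S) : E G S :=
  Quotient.mk (MulAction.orbitRel G S) x

/-- `X̲`: the set of orbits met by `X`. -/
def under (G : Type*) {S : Type*} [Group G] [MulAction G S] (X : Finset S) :
    Set (E G S) :=
  orbOf G '' (X : Set S)

variable (M : GSemimatroid G S)

/-- `𝒞̲ = {X̲ : X ∈ 𝒞}`. -/
def CQ : Set (Set (E G S)) := {A | ∃ X ∈ M.C, under G X = A}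

/-- `rk̲ A = max { rk X : X ∈ 𝒞, X̲ ⊆ A }`. -/
noncomputable def rkQ (A : Set (E G S)) : ℕ :=
  sSup {n : ℕ | ∃ X ∈ M.C, under G X ⊆ A ∧ M.rk X = n}

/-- `𝒞_A`: the central sets lying over `A`. -/
def CA (A : Set (E G S)) : Set (Finset S) := {X | X ∈ M.C ∧ under G X = A}

/-- The type of central sets. -/
abbrev Cen : Type _ := {X : Finset S // X ∈ M.C}

/-- The `G`-orbit relation on central sets. -/
def cenRel (X Y : M.Cen) : Prop := ∃ g : G, X.1.image (g • ·) = Y.1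

/-- The set `𝒞/G` of orbits of central sets. -/
def COrb : Type _ := Quot M.cenRel

/-- The action is cofinite if `𝒞/G` is finite. -/
def Cofinite : Prop := Finite M.COrb

/-- `m_𝔖(A) = |𝒞_A / G|`. -/
noncomputable def m (A : Set (E G S)) : ℕ :=
  Nat.card {O : M.COrb // ∃ X : M.Cen, under G X.1 = A ∧ Quot.mk M.cenRel X = O}

def WeaklyTranslative : Prop :=
  ∀ (g : G) (x : S), ({x, g • x} : Finset S) ∈ M.C →
    M.rk {x, g • x} = M.rk ({x} : Finset S)

def Translative : Prop :=
  ∀ (g : G) (x : S), ({x, g • x} : Finset S) ∈ M.C → g • x = x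

def Centered : Prop := ∃ X ∈ M.C, under G X = (Set.univ : Set (E G S))

def Normal (_M : GSemimatroid G S) : Prop :=
  ∀ x : S, Subgroup.Normal (MulAction.stabilizer G x)

def AlmostArithmetic : Prop := M.Translative ∧ M.Normal

/-- The action is arithmetic: almost-arithmetic, and for every central `X` the set
`W(X) ⊆ Γ^X` is a subgroup (expressed via representative families of group elements). -/
def Arithmetic : Prop :=
  M.AlmostArithmetic ∧
    ∀ ⦃X : Finset S⦄, X ∈ M.C → ∀ γ δ : S → G,
      X.image (fun x => γ x • x) ∈ M.C → X.image (fun x => δ x • x) ∈ M.C →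
        X.image (fun x => (γ x * δ x) • x) ∈ M.C ∧
          X.image (fun x => (γ x)⁻¹ • x) ∈ M.C

/-- Remove from `X` all elements of the orbit `a₀`. -/
noncomputable def strip (a₀ : E G S) (X : Finset S) : Finset S :=
  X.filter (fun x => orbOf G x ≠ a₀)

/-- The Tutte polynomial of a `G`-semimatroid, as a function `ℤ × ℤ → ℤ`. -/
noncomputable def Tutte (x y : ℤ) : ℤ :=
  ∑ᶠ A ∈ M.CQ, (M.m A : ℤ) * (x - 1) ^ (M.rkQ Set.univ - M.rkQ A) *
    (y - 1) ^ (Nat.card A - M.rkQ A)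

end GSemimatroid

namespace MulAction

variable {G : Type*} [Group G]

theorem card_orbitRel_quotient_eq_of_bijective {α β : Type*} [MulAction G α] [MulAction G β]
    {f : α → β} (hf : ∀ (g : G) (a : α), f (g • a) = g • f a) (hbij : Function.Bijective f) :
    Nat.card (orbitRel.Quotient G α) = Nat.card (orbitRel.Quotient G β) := by
  refine Nat.card_congr (Quotient.congr (Equiv.ofBijective f hbij) fun a b => ?_)
  simp only [orbitRel_apply, mem_orbit_iff, Equiv.ofBijective_apply, ← hf, hbij.1.eq_iff]

/-- Choose a point `σ o` in each orbit `o` of `P`; when all of them have stabilizer `H`, the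
orbits of `P × Z` through `{σ o} × Z` are the `H`-orbits of `Z`. -/
theorem card_orbitRel_quotient_prod {P Z : Type*} [MulAction G P] [MulAction G Z]
    (H : Subgroup G) (σ : orbitRel.Quotient G P → P) (hσ : ∀ o, ⟦σ o⟧ = o)
    (hstab : ∀ o, stabilizer G (σ o) = H) :
    Nat.card (orbitRel.Quotient G (P × Z)) =
      Nat.card (orbitRel.Quotient G P) * Nat.card (orbitRel.Quotient H Z) := by
  let f : orbitRel.Quotient G P × orbitRel.Quotient H Z → orbitRel.Quotient G (P × Z) :=
    fun p => Quotient.liftOn p.2 (fun z => ⟦(σ p.1, z)⟧) fun _ _ ⟨h, hz⟩ =>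
      Quotient.sound ⟨h, Prod.ext (show (h : G) • σ p.1 = σ p.1 by
        rw [← mem_stabilizer_iff, hstab]; exact h.2) hz⟩
  have hbij : Function.Bijective f := by
    constructor
    · rintro ⟨o, ⟨z⟩⟩ ⟨o', ⟨z'⟩⟩ hff
      obtain ⟨g, hg⟩ := Quotient.exact hff
      have hgσ : g • σ o' = σ o := congrArg Prod.fst hg
      obtain rfl : o = o' := by rw [← hσ o, ← hσ o', ← hgσ, orbitRel.Quotient.quotient_smul_eq]
      have hgH : g ∈ H := by rw [← hstab o]; exact hgσ
      exact Prod.ext rfl (Quotient.sound ⟨⟨g, hgH⟩, congrArg Prod.snd hg⟩)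
    · rintro ⟨⟨p, z⟩⟩
      obtain ⟨g, hg⟩ := Quotient.exact (hσ ⟦p⟧)
      exact ⟨(⟦p⟧, ⟦g • z⟧), Quotient.sound ⟨g, Prod.ext hg rfl⟩⟩
  rw [← Nat.card_prod, Nat.card_congr (Equiv.ofBijective f hbij)]

theorem card_orbitRel_quotient_quotient_prod (H : Subgroup G) (Z : Type*) [MulAction G Z] :
    Nat.card (orbitRel.Quotient G ((G ⧸ H) × Z)) = Nat.card (orbitRel.Quotient H Z) := by
  have : Subsingleton (orbitRel.Quotient G (G ⧸ H)) :=
    (pretransitive_iff_subsingleton_quotient G _).mp inferInstance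
  rw [card_orbitRel_quotient_prod H (fun _ => ((1 : G) : G ⧸ H)) (fun _ => Subsingleton.elim _ _)
    (fun _ => stabilizer_quotient H), Nat.card_unique, one_mul]

end MulAction

namespace FinSemimatroid

variable {S : Type*} [DecidableEq S] (M : FinSemimatroid S) {P Q Y Z : Finset S}

theorem empty_mem : ∅ ∈ M.C :=
  let ⟨X, hX⟩ := M.nonempty
  M.downClosed hX X.empty_subset

theorem rk_le_rk_erase_add_one (hP : P ∈ M.C) (v : S) : M.rk P ≤ M.rk (P.erase v) + 1 := by
  by_cases hv : v ∈ P
  · have hunion : P.erase v ∪ {v} = P := by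
      rw [Finset.union_comm, ← Finset.insert_eq, Finset.insert_erase hv]
    have h := M.r3 (M.downClosed hP (P.erase_subset v)) (M.singleton_mem v) (by rwa [hunion])
    have hv1 := M.r1 _ (M.singleton_mem v)
    rw [hunion] at h
    rw [Finset.card_singleton] at hv1
    omega
  · rw [Finset.erase_eq_of_notMem hv]
    omega

/-- A maximal central set between `Y` and `Y ∪ Z` has rank at least `rk Z`, by (CR2). -/
theorem exists_augment (hY : Y ∈ M.C) (hZ : Z ∈ M.C) :
    ∃ P ∈ M.C, Y ⊆ P ∧ P ⊆ Y ∪ Z ∧ M.rk Z ≤ M.rk P := by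
  obtain ⟨P, hP, hmax⟩ := ((Y ∪ Z).powerset.filter fun P => P ∈ M.C ∧ Y ⊆ P).exists_max_image
    Finset.card
    ⟨Y, Finset.mem_filter.mpr ⟨Finset.mem_powerset.mpr Finset.subset_union_left, hY, subset_rfl⟩⟩
  simp only [Finset.mem_filter, Finset.mem_powerset] at hP hmax
  obtain ⟨hPYZ, hPC, hYP⟩ := hP
  refine ⟨P, hPC, hYP, hPYZ, not_lt.mp fun hlt => ?_⟩
  obtain ⟨z, hzZ, hzP, hins⟩ := M.cr2 hPC hZ hlt
  have := hmax (insert z P)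
    ⟨Finset.insert_subset (Finset.mem_union_right Y hzZ) hPYZ, hins, hYP.trans (P.subset_insert z)⟩
  rw [Finset.card_insert_of_notMem hzP] at this
  omega

/-- `P.erase y ⊆ Q ∩ P` forces `rk (Q ∩ P) = rk Q`, so (CR1) makes `Q ∪ P ⊇ insert y Q`
central. -/
theorem insert_mem_of_rk_lt (hQ : Q ∈ M.C) (hP : P ∈ M.C) (hPQ : P ⊆ insert y Q)
    (hlt : M.rk Q < M.rk P) : insert y Q ∈ M.C := by
  have hyP : y ∈ P := by
    by_contra hyP
    have := M.r2 hP hQ fun w hw => (Finset.mem_insert.mp (hPQ hw)).resolve_left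
      (ne_of_mem_of_not_mem hw hyP)
    omega
  have herase : P.erase y ⊆ Q ∩ P := fun w hw =>
    Finset.mem_inter.mpr ⟨(Finset.mem_insert.mp (hPQ (Finset.mem_of_mem_erase hw))).resolve_left
      (Finset.ne_of_mem_erase hw), Finset.mem_of_mem_erase hw⟩
  have hQP : Q ∩ P ∈ M.C := M.downClosed hQ Finset.inter_subset_left
  have h1 := M.rk_le_rk_erase_add_one hP y
  have h2 := M.r2 (M.downClosed hP (P.erase_subset y)) hQP herase
  have h3 := M.r2 hQP hQ Finset.inter_subset_left
  exact M.downClosed (M.cr1 hQ hP (by omega))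
    (Finset.insert_subset (Finset.mem_union_right Q hyP) Finset.subset_union_left)

end FinSemimatroid

namespace GSemimatroid

open MulAction

variable {G S : Type*} [Group G] [MulAction G S]

theorem orbOf_smul (g : G) (y : S) : orbOf G (g • y) = orbOf G y :=
  Quotient.sound ⟨g, rfl⟩

theorem exists_smul_eq_of_orbOf_eq {u v : S} (h : orbOf G u = orbOf G v) : ∃ g : G, g • v = u :=
  Quotient.exact h

theorem orbOf_ofQuotientStabilizer (u : S) (c : G ⧸ stabilizer G u) :
    orbOf G (ofQuotientStabilizer G u c) = orbOf G u := by
  induction c using QuotientGroup.induction_on with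
  | H g => rw [ofQuotientStabilizer_mk, orbOf_smul]

theorem under_mono {Y W : Finset S} (h : Y ⊆ W) : under G Y ⊆ under G W :=
  Set.image_mono (Finset.coe_subset.mpr h)

theorem under_filter_orbOf_mem (W : Finset S) (A : Set (E G S)) :
    under G (W.filter fun w => orbOf G w ∈ A) = under G W ∩ A := by
  ext β
  simp only [under, Finset.coe_filter, Set.mem_image, Set.mem_ofPred_eq, Set.mem_inter_iff,
    Finset.mem_coe]
  constructor
  · rintro ⟨w, ⟨hw, hwA⟩, rfl⟩
    exact ⟨⟨w, hw, rfl⟩, hwA⟩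
  · rintro ⟨⟨w, hw, rfl⟩, hwA⟩
    exact ⟨w, ⟨hw, hwA⟩, rfl⟩

variable [DecidableEq S] {M : GSemimatroid G S} {A : Set (E G S)} {α : E G S}
  {T W X Y : Finset S}

theorem under_union : under G (Y ∪ W) = under G Y ∪ under G W := by
  simp only [under, Finset.coe_union, Set.image_union]

theorem under_insert (y : S) : under G (insert y Y) = insert (orbOf G y) (under G Y) := by
  simp only [under, Finset.coe_insert, Set.image_insert_eq]

theorem under_smul (g : G) (X : Finset S) : under G (g • X) = under G X := by
  ext β
  simp only [under, Finset.coe_smul_finset, ← Set.image_smul, Set.image_image, orbOf_smul]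

theorem eq_of_orbOf_eq (htr : M.Translative) (hW : W ∈ M.C) {u v : S} (hu : u ∈ W) (hv : v ∈ W)
    (h : orbOf G u = orbOf G v) : u = v := by
  obtain ⟨g, rfl⟩ := exists_smul_eq_of_orbOf_eq h
  exact htr g v (M.downClosed hW (Finset.insert_subset hv (Finset.singleton_subset_iff.mpr hu)))

theorem smul_eq_self_of_smul_finset_eq (htr : M.Translative) (hX : X ∈ M.C) {g : G}
    (hg : g • X = X) {u : S} (hu : u ∈ X) : g • u = u := by
  have hgu : g • u ∈ X := hg ▸ Finset.smul_mem_smul_finset hu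
  exact htr g u (M.downClosed hX (Finset.insert_subset hu (Finset.singleton_subset_iff.mpr hgu)))

theorem bddAbove_rk (A : Set (E G S)) :
    BddAbove {n : ℕ | ∃ X ∈ M.C, under G X ⊆ A ∧ M.rk X = n} := by
  obtain ⟨d, hd⟩ := M.finDim
  exact ⟨d, by rintro _ ⟨X, hX, -, rfl⟩; exact (M.r1 X hX).trans (hd X hX)⟩

theorem rk_le_rkQ (hY : Y ∈ M.C) (hYA : under G Y ⊆ A) : M.rk Y ≤ M.rkQ A :=
  le_csSup (bddAbove_rk A) ⟨Y, hY, hYA, rfl⟩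

theorem exists_rk_eq_rkQ (A : Set (E G S)) : ∃ X ∈ M.C, under G X ⊆ A ∧ M.rk X = M.rkQ A := by
  refine Nat.sSup_mem ?_ (bddAbove_rk A)
  exact ⟨_, ∅, M.empty_mem, by simp [under], rfl⟩

theorem under_erase_subset (htr : M.Translative) (hW : W ∈ M.C) {z : S} (hz : z ∈ W)
    (hWA : under G W ⊆ insert (orbOf G z) A) : under G (W.erase z) ⊆ A := by
  rintro _ ⟨w, hw, rfl⟩
  refine (hWA ⟨w, Finset.mem_of_mem_erase hw, rfl⟩).resolve_left fun h => ?_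
  exact Finset.ne_of_mem_erase hw (eq_of_orbOf_eq htr hW (Finset.mem_of_mem_erase hw) hz h)

theorem rk_le_rkQ_add_one (htr : M.Translative) (hW : W ∈ M.C)
    (hWA : under G W ⊆ insert α A) : M.rk W ≤ M.rkQ A + 1 := by
  by_cases hα : ∃ z ∈ W, orbOf G z = α
  · obtain ⟨z, hz, rfl⟩ := hα
    have := rk_le_rkQ (M.downClosed hW (W.erase_subset z)) (under_erase_subset htr hW hz hWA)
    have := M.rk_le_rk_erase_add_one hW z
    omega
  · have hWA' : under G W ⊆ A := by
      rintro _ ⟨w, hw, rfl⟩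
      exact (hWA ⟨w, hw, rfl⟩).resolve_left fun h => hα ⟨w, hw, h⟩
    exact (rk_le_rkQ hW hWA').trans (Nat.le_succ _)

theorem rkQ_insert_le (htr : M.Translative) (α : E G S) (A : Set (E G S)) :
    M.rkQ (insert α A) ≤ M.rkQ A + 1 := by
  obtain ⟨W, hW, hWA, hrk⟩ := exists_rk_eq_rkQ (M := M) (insert α A)
  exact hrk ▸ rk_le_rkQ_add_one htr hW hWA

theorem rkQ_union_under_le (htr : M.Translative) (A : Set (E G S)) (T : Finset S) :
    M.rkQ (A ∪ under G T) ≤ M.rkQ A + T.card := by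
  induction T using Finset.induction with
  | empty => simp [under]
  | insert t T ht ih =>
    rw [under_insert, Set.union_insert, Finset.card_insert_of_notMem ht]
    have := rkQ_insert_le (M := M) htr (orbOf G t) (A ∪ under G T)
    omega

/-- A central set `P` of maximal rank `rk̲ A + 1` over `insert α A` contains some `z ∈ α`, and
`P.erase z` has rank at most `rk̲ A`; exchanging `z` for `y` keeps it central. -/
theorem insert_mem_of_rkQ_insert (htr : M.Translative) (hr : M.rkQ (insert α A) = M.rkQ A + 1)
    (hY : Y ∈ M.C) (hYA : under G Y ⊆ A) {y : S} (hy : orbOf G y = α) : insert y Y ∈ M.C := by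
  have hα : α ∉ A := fun h => by rw [Set.insert_eq_of_mem h] at hr; omega
  obtain ⟨Z, hZ, hZA, hrkZ⟩ := exists_rk_eq_rkQ (M := M) (insert α A)
  obtain ⟨P, hP, hYP, hPYZ, hrkP⟩ := M.exists_augment hY hZ
  have hPA : under G P ⊆ insert α A := by
    refine (under_mono hPYZ).trans ?_
    rw [under_union]
    exact Set.union_subset (hYA.trans (Set.subset_insert α A)) hZA
  obtain ⟨z, hzP, hzα⟩ : ∃ z ∈ P, orbOf G z = α := by
    by_contra! hno
    have : under G P ⊆ A := by
      rintro _ ⟨w, hw, rfl⟩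
      exact (hPA ⟨w, hw, rfl⟩).resolve_left (hno w hw)
    have := rk_le_rkQ hP this
    omega
  have hQ : P.erase z ∈ M.C := M.downClosed hP (P.erase_subset z)
  have hrkQ := rk_le_rkQ hQ (under_erase_subset htr hP hzP (hzα ▸ hPA))
  obtain ⟨P', hP', hyP', hP'P, hrkP'⟩ := M.exists_augment (M.singleton_mem y) hP
  replace hyP' : y ∈ P' := Finset.singleton_subset_iff.mp hyP'
  have hP'Q : P' ⊆ insert y (P.erase z) := by
    intro w hw
    rcases Finset.mem_union.mp (hP'P hw) with h | h
    · exact Finset.mem_insert.mpr (Or.inl (Finset.mem_singleton.mp h))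
    · by_cases hwz : w = z
      · subst hwz
        exact Finset.mem_insert.mpr (Or.inl (eq_of_orbOf_eq htr hP' hw hyP' (hzα.trans hy.symm)))
      · exact Finset.mem_insert_of_mem (Finset.mem_erase.mpr ⟨hwz, h⟩)
  have hYQ : Y ⊆ P.erase z := fun w hw =>
    Finset.mem_erase.mpr ⟨fun h => hα (hzα ▸ h ▸ hYA ⟨w, hw, rfl⟩), hYP hw⟩
  exact M.downClosed (M.insert_mem_of_rk_lt hQ hP' hP'Q (by omega))
    (Finset.insert_subset_insert y hYQ)

theorem union_mem_of_rkQ_union_under (htr : M.Translative)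
    (hT : M.rkQ (A ∪ under G T) = M.rkQ A + T.card) (hY : Y ∈ M.C) (hYA : under G Y ⊆ A) :
    Y ∪ T ∈ M.C := by
  induction T using Finset.induction with
  | empty => simpa using hY
  | insert t T ht ih =>
    rw [under_insert, Set.union_insert, Finset.card_insert_of_notMem ht] at hT
    have h1 := rkQ_insert_le (M := M) htr (orbOf G t) (A ∪ under G T)
    have h2 := rkQ_union_under_le (M := M) htr A T
    rw [Finset.union_insert]
    refine insert_mem_of_rkQ_insert (A := A ∪ under G T) htr (by omega) (ih (by omega)) ?_ rfl
    rw [under_union]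
    exact Set.union_subset_union_left _ hYA

theorem stabilizer_eq_of_orbOf_eq (hn : M.Normal) {u v : S} (h : orbOf G u = orbOf G v) :
    stabilizer G u = stabilizer G v := by
  obtain ⟨g, rfl⟩ := exists_smul_eq_of_orbOf_eq h
  have := hn v
  rw [stabilizer_smul_eq_stabilizer_map_conj]
  exact Subgroup.Normal.map_conj_eq _ g

/-- By translativity the stabilizer of a central set fixes it pointwise, and by normality the
stabilizer of a point only depends on its orbit. -/
theorem stabilizer_eq_of_under_eq (htr : M.Translative) (hn : M.Normal) (hX : X ∈ M.C)
    (hY : Y ∈ M.C) (h : under G X = under G Y) : stabilizer G X = stabilizer G Y := by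
  suffices key : ∀ {X Y : Finset S}, X ∈ M.C → under G X = under G Y →
      stabilizer G X ≤ stabilizer G Y from le_antisymm (key hX h) (key hY h.symm)
  intro X Y hX h g hg
  have hfix : ∀ v ∈ Y, g • v = v := fun v hv => by
    obtain ⟨u, hu, huv⟩ : orbOf G v ∈ under G X := by rw [h]; exact ⟨v, hv, rfl⟩
    have : g ∈ stabilizer G u := smul_eq_self_of_smul_finset_eq htr hX hg hu
    rwa [stabilizer_eq_of_orbOf_eq hn huv] at this
  rw [mem_stabilizer_iff, Finset.smul_finset_def]
  exact (Finset.image_congr hfix).trans Finset.image_id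

variable (M) in
def centralOver (A : Set (E G S)) : SubMulAction G (Finset S) where
  carrier := M.CA A
  smul_mem' g _ hX := ⟨M.smul_mem g hX.1, (under_smul g _).trans hX.2⟩

theorem cenRel_iff {X Y : M.Cen} : M.cenRel X Y ↔ ∃ g : G, g • X.1 = Y.1 :=
  Iff.rfl

theorem quot_mk_cenRel_eq_iff {X Y : M.Cen} :
    Quot.mk M.cenRel X = Quot.mk M.cenRel Y ↔ ∃ g : G, g • X.1 = Y.1 := by
  have hequiv : Equivalence M.cenRel := by
    refine ⟨fun _ => cenRel_iff.mpr ⟨1, one_smul G _⟩, fun h => ?_, fun h h' => ?_⟩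
    · obtain ⟨g, hg⟩ := cenRel_iff.mp h
      exact cenRel_iff.mpr ⟨g⁻¹, by rw [← hg, inv_smul_smul]⟩
    · obtain ⟨g, hg⟩ := cenRel_iff.mp h
      obtain ⟨g', hg'⟩ := cenRel_iff.mp h'
      exact cenRel_iff.mpr ⟨g' * g, by rw [mul_smul, hg, hg']⟩
  exact ⟨fun h => cenRel_iff.mp (hequiv.eqvGen_iff.mp (Quot.eqvGen_exact h)),
    fun h => Quot.sound (cenRel_iff.mpr h)⟩

theorem m_eq_card_orbitRel_quotient (A : Set (E G S)) :
    M.m A = Nat.card (orbitRel.Quotient G (M.centralOver A)) := by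
  let f : orbitRel.Quotient G (M.centralOver A) →
      {O : M.COrb // ∃ X : M.Cen, under G X.1 = A ∧ Quot.mk M.cenRel X = O} :=
    Quotient.lift (fun X => ⟨Quot.mk _ ⟨X.1, X.2.1⟩, ⟨X.1, X.2.1⟩, X.2.2, rfl⟩)
      fun _ _ ⟨g, hg⟩ => Subtype.ext (quot_mk_cenRel_eq_iff.mpr ⟨g⁻¹, by
        rw [← hg, SubMulAction.val_smul, inv_smul_smul]⟩)
  have hbij : Function.Bijective f := by
    constructor
    · rintro ⟨X⟩ ⟨Y⟩ hXY
      obtain ⟨g, hg⟩ := quot_mk_cenRel_eq_iff.mp (congrArg Subtype.val hXY)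
      have hg' : g • (X : Finset S) = Y := hg
      exact Quotient.sound ⟨g⁻¹, Subtype.ext (by rw [SubMulAction.val_smul, ← hg', inv_smul_smul])⟩
    · rintro ⟨_, X, hXA, rfl⟩
      exact ⟨⟦⟨X.1, X.2, hXA⟩⟧, rfl⟩
  exact Nat.card_congr (Equiv.ofBijective f hbij).symm

theorem filter_orbOf_mem_union (hYA : under G Y ⊆ A) (hTA : ∀ w ∈ T, orbOf G w ∉ A) :
    (Y ∪ T).filter (fun w => orbOf G w ∈ A) = Y := by
  rw [Finset.filter_union, Finset.filter_true_of_mem fun w hw => hYA ⟨w, hw, rfl⟩,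
    Finset.filter_false_of_mem hTA, Finset.union_empty]

theorem filter_orbOf_notMem_union (hYA : under G Y ⊆ A) (hTA : ∀ w ∈ T, orbOf G w ∉ A) :
    (Y ∪ T).filter (fun w => orbOf G w ∉ A) = T := by
  rw [Finset.filter_union, Finset.filter_false_of_mem fun w hw h => h (hYA ⟨w, hw, rfl⟩),
    Finset.filter_true_of_mem hTA, Finset.empty_union]

section PointsOf

variable {ι : Type*} [Fintype ι] {x : ι → S}

variable (x) in
def pointsOf (z : (i : ι) → G ⧸ stabilizer G (x i)) : Finset S :=
  Finset.univ.image fun i => ofQuotientStabilizer G (x i) (z i)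

theorem mem_pointsOf {z : (i : ι) → G ⧸ stabilizer G (x i)} {w : S} :
    w ∈ pointsOf x z ↔ ∃ i, ofQuotientStabilizer G (x i) (z i) = w := by
  simp [pointsOf]

theorem under_pointsOf (z : (i : ι) → G ⧸ stabilizer G (x i)) :
    under G (pointsOf x z) = Set.range fun i => orbOf G (x i) := by
  ext β
  simp [under, pointsOf, orbOf_ofQuotientStabilizer]

theorem pointsOf_smul (g : G) (z : (i : ι) → G ⧸ stabilizer G (x i)) :
    pointsOf x (g • z) = g • pointsOf x z := by
  simp only [pointsOf, Finset.smul_finset_def, Finset.image_image, Pi.smul_apply,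
    ofQuotientStabilizer_smul]
  rfl

theorem orbOf_notMem_of_mem_pointsOf (hxA : ∀ i, orbOf G (x i) ∉ A)
    {z : (i : ι) → G ⧸ stabilizer G (x i)} {w : S} (hw : w ∈ pointsOf x z) : orbOf G w ∉ A := by
  obtain ⟨i, rfl⟩ := mem_pointsOf.mp hw
  rw [orbOf_ofQuotientStabilizer]
  exact hxA i

theorem card_pointsOf (hx : Function.Injective fun i => orbOf G (x i))
    (z : (i : ι) → G ⧸ stabilizer G (x i)) : (pointsOf x z).card = Fintype.card ι :=
  Finset.card_image_of_injective _ fun i j h => hx (by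
    simpa only [orbOf_ofQuotientStabilizer] using congrArg (orbOf G) h)

theorem pointsOf_injective (hx : Function.Injective fun i => orbOf G (x i)) :
    Function.Injective (pointsOf (G := G) x) := by
  intro z z' h
  funext i
  obtain ⟨j, hj⟩ := mem_pointsOf.mp (h ▸ mem_pointsOf.mpr ⟨i, rfl⟩ : _ ∈ pointsOf x z')
  obtain rfl : j = i := hx (by simpa only [orbOf_ofQuotientStabilizer] using congrArg (orbOf G) hj)
  exact (injective_ofQuotientStabilizer G (x j) hj).symm

theorem exists_pointsOf_eq_filter (htr : M.Translative) (hxA : ∀ i, orbOf G (x i) ∉ A)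
    (hW : W ∈ M.C) (hWA : under G W = A ∪ Set.range fun i => orbOf G (x i)) :
    ∃ z : (i : ι) → G ⧸ stabilizer G (x i), pointsOf x z = W.filter fun w => orbOf G w ∉ A := by
  have hpt : ∀ i, ∃ c : G ⧸ stabilizer G (x i), ofQuotientStabilizer G (x i) c ∈ W := fun i => by
    obtain ⟨w, hw, hwx⟩ : orbOf G (x i) ∈ under G W := by rw [hWA]; exact Or.inr ⟨i, rfl⟩
    obtain ⟨g, rfl⟩ := exists_smul_eq_of_orbOf_eq hwx
    exact ⟨g, hw⟩
  choose z hz using hpt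
  refine ⟨z, Finset.ext fun w => ⟨fun hw => ?_, fun hw => ?_⟩⟩
  · obtain ⟨i, rfl⟩ := mem_pointsOf.mp hw
    exact Finset.mem_filter.mpr ⟨hz i, orbOf_notMem_of_mem_pointsOf hxA hw⟩
  · obtain ⟨hwW, hwA⟩ := Finset.mem_filter.mp hw
    obtain ⟨i, hi⟩ : orbOf G w ∈ Set.range fun i => orbOf G (x i) := by
      have hwB : orbOf G w ∈ under G W := ⟨w, hwW, rfl⟩
      rw [hWA] at hwB
      exact hwB.resolve_left hwA
    refine mem_pointsOf.mpr ⟨i, eq_of_orbOf_eq htr hW (hz i) hwW ?_⟩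
    rw [orbOf_ofQuotientStabilizer, ← hi]

def unionPointsOf (htr : M.Translative) (hx : Function.Injective fun i => orbOf G (x i))
    (hrk : M.rkQ (A ∪ Set.range fun i => orbOf G (x i)) = M.rkQ A + Fintype.card ι)
    (p : M.centralOver A × ((i : ι) → G ⧸ stabilizer G (x i))) :
    M.centralOver (A ∪ Set.range fun i => orbOf G (x i)) :=
  ⟨p.1 ∪ pointsOf x p.2,
    union_mem_of_rkQ_union_under htr (by rwa [under_pointsOf, card_pointsOf hx]) p.1.2.1
      p.1.2.2.le,
    by rw [under_union, p.1.2.2, under_pointsOf]⟩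

variable (htr : M.Translative) (hx : Function.Injective fun i => orbOf G (x i))
  (hrk : M.rkQ (A ∪ Set.range fun i => orbOf G (x i)) = M.rkQ A + Fintype.card ι)

theorem unionPointsOf_smul (g : G) (p : M.centralOver A × ((i : ι) → G ⧸ stabilizer G (x i))) :
    unionPointsOf htr hx hrk (g • p) = g • unionPointsOf htr hx hrk p :=
  Subtype.ext (by
    simp only [unionPointsOf, Prod.smul_fst, Prod.smul_snd, SubMulAction.val_smul, pointsOf_smul,
      Finset.smul_finset_union])

theorem unionPointsOf_bijective (hxA : ∀ i, orbOf G (x i) ∉ A) :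
    Function.Bijective (unionPointsOf htr hx hrk) := by
  have hptsA : ∀ z : (i : ι) → G ⧸ stabilizer G (x i), ∀ w ∈ pointsOf x z, orbOf G w ∉ A :=
    fun _ _ => orbOf_notMem_of_mem_pointsOf hxA
  constructor
  · rintro ⟨Y, z⟩ ⟨Y', z'⟩ h
    have h' : Y.1 ∪ pointsOf x z = Y'.1 ∪ pointsOf x z' := congrArg Subtype.val h
    have hY := filter_orbOf_mem_union Y.2.2.le (hptsA z)
    have hz := filter_orbOf_notMem_union Y.2.2.le (hptsA z)
    rw [h', filter_orbOf_mem_union Y'.2.2.le (hptsA z')] at hY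
    rw [h', filter_orbOf_notMem_union Y'.2.2.le (hptsA z')] at hz
    exact Prod.ext (Subtype.ext hY.symm) (pointsOf_injective hx hz.symm)
  · rintro ⟨W, hW, hWA⟩
    obtain ⟨z, hz⟩ := exists_pointsOf_eq_filter htr hxA hW hWA
    have hY : W.filter (fun w => orbOf G w ∈ A) ∈ M.centralOver A :=
      ⟨M.downClosed hW (Finset.filter_subset _ W),
        by rw [under_filter_orbOf_mem, hWA, Set.union_inter_cancel_left]⟩
    exact ⟨(⟨_, hY⟩, z), Subtype.ext (by
      simp only [unionPointsOf, hz, Finset.filter_union_filter_not_eq])⟩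

end PointsOf

end GSemimatroid

open GSemimatroid

/-- The index `[Γ(X) × Π Γ(xᵢ) : θ(G)]` is expressed as the number of orbits of the diagonal
`G`-action on `(G ⧸ stab X) × Π (G ⧸ stab xᵢ)`. -/
theorem almostArithmetic_multiplicity_index_general
    {G S : Type*} [Group G] [MulAction G S] [DecidableEq S]
    (M : GSemimatroid G S) (haa : M.AlmostArithmetic)
    (A : Set (E G S)) (k : ℕ) (a : Fin k → E G S)
    (hinj : Function.Injective a) (hnotin : ∀ i, a i ∉ A)
    (hrk : M.rkQ (A ∪ Set.range a) = M.rkQ A + k) :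
    ∀ X ∈ M.CA A, ∀ x : Fin k → S, (∀ i, orbOf G (x i) = a i) →
      M.m (A ∪ Set.range a) =
        M.m A * Nat.card (Quotient (MulAction.orbitRel G
          ((G ⧸ MulAction.stabilizer G X) ×
            ((i : Fin k) → G ⧸ MulAction.stabilizer G (x i))))) := by
  intro X hX x hx
  obtain ⟨htr, hn⟩ := haa
  obtain rfl : a = fun i => orbOf G (x i) := funext fun i => (hx i).symm
  replace hrk := hrk.trans (congrArg (M.rkQ A + ·) (Fintype.card_fin k).symm)
  rw [m_eq_card_orbitRel_quotient, m_eq_card_orbitRel_quotient,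
    ← MulAction.card_orbitRel_quotient_eq_of_bijective (unionPointsOf_smul htr hinj hrk)
      (unionPointsOf_bijective htr hinj hrk hnotin),
    MulAction.card_orbitRel_quotient_prod (MulAction.stabilizer G X) Quotient.out Quotient.out_eq
      fun o => ?_,
    MulAction.card_orbitRel_quotient_quotient_prod]
  rw [SubMulAction.stabilizer_of_subMul]
  exact stabilizer_eq_of_under_eq htr hn (Quotient.out o).2.1 hX.1
    ((Quotient.out o).2.2.trans hX.2.symm)

/-- For an almost-arithmetic cofinite `G`-semimatroid: if
`rk̲(A ∪ {a₁,…,a_k}) = rk̲ A + k` for distinct orbits `aᵢ ∉ A`, then for every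
`X ∈ 𝒞_A` and representatives `xᵢ ∈ aᵢ` the quotient multiplicity satisfies
`m(A ∪ {a₁,…,a_k}) = m(A) · [Γ(X) × Π Γ(xᵢ) : θ(G)]`, where the index of the image of
the diagonal map `θ` is expressed as the number of orbits of the diagonal
`G`-translation action on `(G ⧸ stab X) × Π (G ⧸ stab xᵢ)`. -/
theorem almostArithmetic_multiplicity_index
    {G S : Type*} [Group G] [MulAction G S] [DecidableEq S]
    (M : GSemimatroid G S) (hcof : M.Cofinite) (haa : M.AlmostArithmetic)
    (A : Set (E G S)) (hA : A ∈ M.CQ) (k : ℕ) (a : Fin k → E G S)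
    (hinj : Function.Injective a) (hnotin : ∀ i, a i ∉ A)
    (hrk : M.rkQ (A ∪ Set.range a) = M.rkQ A + k) :
    ∀ X ∈ M.CA A, ∀ x : Fin k → S, (∀ i, orbOf G (x i) = a i) →
      M.m (A ∪ Set.range a) =
        M.m A * Nat.card (Quotient (MulAction.orbitRel G
          ((G ⧸ MulAction.stabilizer G X) ×
            ((i : Fin k) → G ⧸ MulAction.stabilizer G (x i))))) :=
  almostArithmetic_multiplicity_index_general M haa A k a hinj hnotin hrk
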